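/- arXiv:1409.3941 — 6 statements merged into one kernel-verified Lean document; each statement's English description precedes it below -/
import Mathlib

section
/- Let S = (Xin, X0, {Xi}_{i∈I}, {Ti}_{i∈I}) be a CPDS over ℝ^d, P a template basis, and w : P → EReal a feasible invariant bound with respect to S. Then the reachable set R(S) is contained in the P-sublevel set w⋆. -/
section

variable {d : ℕ} {ι : Type*}

/-- The `P`-support function `X†` of a set `X ⊆ ℝ^d`. -/
noncomputable def PSupport {d : ℕ} (P : Set ((Fin d → ℝ) → ℝ)) (X : Set (Fin d → ℝ)) :
    P → EReal :=
  fun p => ⨆ x ∈ X, ((p : (Fin d → ℝ) → ℝ) x : EReal)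

/-- The `P`-sublevel set `w⋆` of a bound function `w : P → EReal`. -/
def PSublevel {d : ℕ} (P : Set ((Fin d → ℝ) → ℝ)) (w : P → EReal) :
    Set (Fin d → ℝ) :=
  {x | ∀ p : P, ((p : (Fin d → ℝ) → ℝ) x : EReal) ≤ w p}

/-- The reachable set of the CPDS `(Xin, X0, {Xi}, {Ti})`: the smallest subset
`R` of `ℝ^d` with `Xin ⊆ R` and `Ti '' (R ∩ Xi ∩ X0) ⊆ R` for all `i`. -/
def Reach (Xin X0 : Set (Fin d → ℝ)) (X : ι → Set (Fin d → ℝ))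
    (T : ι → (Fin d → ℝ) → (Fin d → ℝ)) : Set (Fin d → ℝ) :=
  ⋂₀ {C | Xin ⊆ C ∧ ∀ i : ι, T i '' (C ∩ X i ∩ X0) ⊆ C}

/-- `w : P → EReal` is a feasible invariant bound w.r.t. the CPDS. -/
def FeasibleBound (P : Set ((Fin d → ℝ) → ℝ)) (Xin X0 : Set (Fin d → ℝ))
    (X : ι → Set (Fin d → ℝ)) (T : ι → (Fin d → ℝ) → (Fin d → ℝ))
    (w : P → EReal) : Prop :=
  ∃ wi : ι → P → EReal,
    (∀ p : P, max (PSupport P Xin p) (⨆ i : ι, wi i p) ≤ w p) ∧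
    ∀ (i : ι) (p : P),
      PSupport P (T i '' (PSublevel P w ∩ X i ∩ X0)) p ≤ wi i p

/-- If `w` is a feasible invariant bound w.r.t. the CPDS `S`, then the reachable
set `R(S)` is contained in the `P`-sublevel set `w⋆`. -/
theorem reach_subset_psublevel_of_feasibleBound (d : ℕ) (ι : Type*) [Fintype ι]
    (P : Set ((Fin d → ℝ) → ℝ)) (Xin X0 : Set (Fin d → ℝ))
    (X : ι → Set (Fin d → ℝ)) (T : ι → (Fin d → ℝ) → (Fin d → ℝ))
    (w : P → EReal) (hw : FeasibleBound P Xin X0 X T w) :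
    Reach Xin X0 X T ⊆ PSublevel P w := by
  obtain ⟨wi, hmax, hstep⟩ := hw
  apply Set.sInter_subset_of_mem
  constructor
  · intro x hx p
    refine le_trans ?_ ((le_max_left _ _).trans (hmax p))
    exact le_iSup₂ (f := fun x (_ : x ∈ Xin) => ((p : (Fin d → ℝ) → ℝ) x : EReal)) x hx
  · intro i y hy p
    refine le_trans ?_ (le_trans (le_iSup (fun i => wi i p) i) ((le_max_right _ _).trans (hmax p)))
    refine le_trans ?_ (hstep i p)
    exact le_iSup₂ (f := fun x (_ : x ∈ T i '' (PSublevel P w ∩ X i ∩ X0)) =>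
      ((p : (Fin d → ℝ) → ℝ) x : EReal)) y hy
end
end

section
/- Let S = (Xin, X0, {Xi}_{i∈I}, {Ti}_{i∈I}) be a CPDS over ℝ^d with I finite, and P a template basis. Consider the monotone map F♯ sending tuples w = (w_1, …, w_{|I|}, w_last) of functions P → EReal to the tuple with components F♯_i(w)(p) := (Ti '' ((w_last)⋆ ∩ Xi ∩ X0))†(p) for i ∈ I, and F♯_last(w)(p) := ((⋃_{i∈I} (w_i)⋆) ∪ Xin)†(p). Then the set of tuples w with F♯_i(w) ≤ w_i for all components (pointwise on P) has a least element W, the last component W_last of W is a feasible invariant bound with respect to S, and W_last ≤ v (pointwise) for every feasible invariant bound v with respect to S. -/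
section

variable {d : ℕ} {ι : Type*}

/-- The abstract semantics functional `F♯` on tuples `(w₁, …, w_{|I|}, w_last)`:
the component `i ∈ I` of `F♯(w)` is `(Ti '' ((w_last)⋆ ∩ Xi ∩ X0))†`, and the last
component is `((⋃ i, (wᵢ)⋆) ∪ Xin)†`. -/
noncomputable def Fsharp (P : Set ((Fin d → ℝ) → ℝ)) (Xin X0 : Set (Fin d → ℝ))
    (X : ι → Set (Fin d → ℝ)) (T : ι → (Fin d → ℝ) → (Fin d → ℝ))
    (w : (ι → (P → EReal)) × (P → EReal)) :
    (ι → (P → EReal)) × (P → EReal) :=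
  (fun i => PSupport P (T i '' (PSublevel P w.2 ∩ X i ∩ X0)),
    PSupport P ((⋃ i : ι, PSublevel P (w.1 i)) ∪ Xin))


/-! `X ↦ X†` and `w ↦ w⋆` form a Galois connection (`X† ≤ w ↔ X ⊆ w⋆`), so `F♯` is monotone and
Knaster–Tarski provides its least pre-fixpoint `W`. The last component of any pre-fixpoint `w` is a
feasible bound, with witnesses `F♯ᵢ(w)`; conversely a feasible bound `v` with witnesses `(wᵢ)` makes
`(wᵢ, v)` a pre-fixpoint, so `W ≤ (wᵢ, v)`. -/

theorem gc_pSupport_pSublevel (P : Set ((Fin d → ℝ) → ℝ)) :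
    GaloisConnection (PSupport P) (PSublevel P) := fun _ _ =>
  ⟨fun h x hx p => (le_iSup₂_of_le x hx le_rfl).trans (h p),
    fun h p => iSup₂_le fun _ hx => h hx p⟩

theorem monotone_fsharp (P : Set ((Fin d → ℝ) → ℝ)) (Xin X0 : Set (Fin d → ℝ))
    (X : ι → Set (Fin d → ℝ)) (T : ι → (Fin d → ℝ) → (Fin d → ℝ)) :
    Monotone (Fsharp P Xin X0 X T) := by
  have gc := gc_pSupport_pSublevel (d := d) P
  intro w w' hw
  refine ⟨fun i => gc.monotone_l ?_, gc.monotone_l ?_⟩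
  · gcongr
    exact gc.monotone_u hw.2
  · gcongr with i
    exact gc.monotone_u (hw.1 i)

theorem feasibleBound_of_fsharp_le {P : Set ((Fin d → ℝ) → ℝ)} {Xin X0 : Set (Fin d → ℝ)}
    {X : ι → Set (Fin d → ℝ)} {T : ι → (Fin d → ℝ) → (Fin d → ℝ)}
    {w : (ι → (P → EReal)) × (P → EReal)} (hw : Fsharp P Xin X0 X T w ≤ w) :
    FeasibleBound P Xin X0 X T w.2 := by
  have gc := gc_pSupport_pSublevel (d := d) P
  refine ⟨(Fsharp P Xin X0 X T w).1, fun p => max_le ?_ (iSup_le fun i => ?_), fun _ _ => le_rfl⟩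
  · exact gc.monotone_l Set.subset_union_right p |>.trans (hw.2 p)
  · have himage : T i '' (PSublevel P w.2 ∩ X i ∩ X0) ⊆ PSublevel P (w.1 i) :=
      gc.le_u (hw.1 i)
    refine gc.monotone_l ?_ p |>.trans (hw.2 p)
    exact himage.trans ((Set.subset_iUnion (fun j => PSublevel P (w.1 j)) i).trans
      Set.subset_union_left)

theorem fsharp_le_of_feasibleBound {P : Set ((Fin d → ℝ) → ℝ)} {Xin X0 : Set (Fin d → ℝ)}
    {X : ι → Set (Fin d → ℝ)} {T : ι → (Fin d → ℝ) → (Fin d → ℝ)} {v : P → EReal}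
    {wi : ι → P → EReal} (hv : ∀ p : P, max (PSupport P Xin p) (⨆ i : ι, wi i p) ≤ v p)
    (hwi : ∀ (i : ι) (p : P), PSupport P (T i '' (PSublevel P v ∩ X i ∩ X0)) p ≤ wi i p) :
    Fsharp P Xin X0 X T (wi, v) ≤ (wi, v) := by
  have gc := gc_pSupport_pSublevel (d := d) P
  refine ⟨hwi, gc.l_le (Set.union_subset (Set.iUnion_subset fun i => ?_) ?_)⟩
  · exact gc.monotone_u fun p => (le_iSup (fun j => wi j p) i).trans
      ((le_max_right _ _).trans (hv p))
  · exact gc.le_u fun p => (le_max_left _ _).trans (hv p)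

theorem abstract_semantics_least_fixpoint_general (d : ℕ) (ι : Type*)
    (P : Set ((Fin d → ℝ) → ℝ)) (Xin X0 : Set (Fin d → ℝ))
    (X : ι → Set (Fin d → ℝ)) (T : ι → (Fin d → ℝ) → (Fin d → ℝ)) :
    ∃ W : (ι → (P → EReal)) × (P → EReal),
      Fsharp P Xin X0 X T W ≤ W ∧
      (∀ w' : (ι → (P → EReal)) × (P → EReal),
        Fsharp P Xin X0 X T w' ≤ w' → W ≤ w') ∧
      FeasibleBound P Xin X0 X T W.2 ∧
      ∀ v : P → EReal, FeasibleBound P Xin X0 X T v → W.2 ≤ v := by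
  let F : ((ι → (P → EReal)) × (P → EReal)) →o ((ι → (P → EReal)) × (P → EReal)) :=
    ⟨Fsharp P Xin X0 X T, monotone_fsharp P Xin X0 X T⟩
  have hfix : F F.lfp ≤ F.lfp := F.map_lfp.le
  refine ⟨F.lfp, hfix, fun w' hw' => F.lfp_le hw', feasibleBound_of_fsharp_le hfix, ?_⟩
  rintro v ⟨wi, hv, hwi⟩
  exact (F.lfp_le (fsharp_le_of_feasibleBound hv hwi)).2

/-- The set of tuples `w` with `F♯(w) ≤ w` (componentwise, pointwise on `P`)
has a least element `W`; the last component of `W` is a feasible invariant bound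
w.r.t. the CPDS, and it is below every feasible invariant bound. -/
theorem abstract_semantics_least_fixpoint (d : ℕ) (ι : Type*) [Fintype ι]
    (P : Set ((Fin d → ℝ) → ℝ)) (Xin X0 : Set (Fin d → ℝ))
    (X : ι → Set (Fin d → ℝ)) (T : ι → (Fin d → ℝ) → (Fin d → ℝ)) :
    ∃ W : (ι → (P → EReal)) × (P → EReal),
      Fsharp P Xin X0 X T W ≤ W ∧
      (∀ w' : (ι → (P → EReal)) × (P → EReal),
        Fsharp P Xin X0 X T w' ≤ w' → W ≤ w') ∧
      FeasibleBound P Xin X0 X T W.2 ∧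
      ∀ v : P → EReal, FeasibleBound P Xin X0 X T v → W.2 ≤ v :=
  abstract_semantics_least_fixpoint_general d ι P Xin X0 X T

end
end

section
/- Let S = (Xin, X0, {Xi}_{i∈I}, {Ti}_{i∈I}) be a CPDS over ℝ^d, κ : ℝ^d → ℝ, and suppose X0 ⊆ {x | ∀ j, r0_j(x) ≤ 0} and Xi ⊆ {x | ∀ j, ri_j(x) ≤ 0} for each i ∈ I, for given test functions r0_j, ri_j : ℝ^d → ℝ. Let K be a convex cone of nonnegative functions containing the scalars, and suppose the finite template basis {p_1, …, p_k} is K well-representative with respect to S and κ, with witnessing data w ∈ ℝ^k and α ∈ ℝ. Then, with V := {x ∈ ℝ^d | ∀ l, p_l(x) ≤ w_l}, one has: Xin ⊆ V; for every i ∈ I and x ∈ V ∩ Xi ∩ X0, Ti(x) ∈ V; the reachable set R(S) is contained in V; and κ(x) ≤ α for every x ∈ V. -/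
section

variable {d : ℕ} {ι : Type*}

/-- If the finite template basis `{p₁, …, p_k}` is `K` well-representative w.r.t. the
CPDS `S` and `κ`, with witnessing data `w ∈ ℝ^k`, `α ∈ ℝ` (the hypotheses below spell
out the defining conditions), then with `V = {x | ∀ l, p_l(x) ≤ w_l}`: `Xin ⊆ V`, `V` is
inductive (each branch maps `V ∩ Xi ∩ X0` into `V`), the reachable set `R(S)` is
contained in `V`, and `κ(x) ≤ α` for every `x ∈ V`. -/
theorem kWellRep_invariant (d : ℕ) (ι : Type*) [Fintype ι]
    (Xin X0 : Set (Fin d → ℝ)) (X : ι → Set (Fin d → ℝ))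
    (T : ι → (Fin d → ℝ) → (Fin d → ℝ))
    (κ : (Fin d → ℝ) → ℝ)
    (n0 : ℕ) (r0 : Fin n0 → (Fin d → ℝ) → ℝ)
    (ni : ι → ℕ) (ri : (i : ι) → Fin (ni i) → (Fin d → ℝ) → ℝ)
    (hX0 : X0 ⊆ {x | ∀ j : Fin n0, r0 j x ≤ 0})
    (hXi : ∀ i : ι, X i ⊆ {x | ∀ j : Fin (ni i), ri i j x ≤ 0})
    -- `K` is a convex cone of nonnegative functions containing the scalars:
    (K : Set ((Fin d → ℝ) → ℝ))
    (hKnonneg : ∀ f ∈ K, ∀ x : Fin d → ℝ, 0 ≤ f x)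
    (hKadd : ∀ f ∈ K, ∀ g ∈ K, (fun x => f x + g x) ∈ K)
    (hKsmul : ∀ f ∈ K, ∀ t : ℝ, 0 ≤ t → (fun x => t * f x) ∈ K)
    (hKconst : ∀ c : ℝ, 0 ≤ c → (fun _ : Fin d → ℝ => c) ∈ K)
    -- the template basis and the witnessing data of `K` well-representativeness:
    (k : ℕ) (p : Fin k → (Fin d → ℝ) → ℝ) (w : Fin k → ℝ) (α : ℝ)
    (ν : Fin k → (Fin d → ℝ) → ℝ) (hν : ∀ t, ν t ∈ K)
    (lam : ι → Fin k → Fin k → (Fin d → ℝ) → ℝ)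
    (hlam : ∀ i l j, lam i l j ∈ K)
    (mu : (i : ι) → Fin k → Fin (ni i) → (Fin d → ℝ) → ℝ)
    (hmu : ∀ i l j, mu i l j ∈ K)
    (gam : ι → Fin k → Fin n0 → (Fin d → ℝ) → ℝ)
    (hgam : ∀ i l j, gam i l j ∈ K)
    -- (1) initial condition satisfiability:
    (hinit : ∀ l : Fin k, ∀ y ∈ Xin, p l y ≤ w l)
    -- (2) "local" branch satisfiability:
    (hloc : ∀ (i : ι) (l : Fin k),
      (fun x => w l - (∑ j : Fin k, lam i l j x * (w j - p j x)) - p l (T i x)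
        + (∑ j : Fin (ni i), mu i l j x * ri i j x)
        + (∑ j : Fin n0, gam i l j x * r0 j x)) ∈ K)
    -- (3) property satisfiability:
    (hprop : (fun x => α - κ x - ∑ t : Fin k, ν t x * (w t - p t x)) ∈ K) :
    Xin ⊆ {x | ∀ l : Fin k, p l x ≤ w l} ∧
    (∀ i : ι, ∀ x ∈ {x | ∀ l : Fin k, p l x ≤ w l} ∩ X i ∩ X0,
      T i x ∈ {x | ∀ l : Fin k, p l x ≤ w l}) ∧
    Reach Xin X0 X T ⊆ {x | ∀ l : Fin k, p l x ≤ w l} ∧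
    ∀ x ∈ {x | ∀ l : Fin k, p l x ≤ w l}, κ x ≤ α := by
  have hind : ∀ i : ι, ∀ x ∈ {x | ∀ l : Fin k, p l x ≤ w l} ∩ X i ∩ X0,
      T i x ∈ {x | ∀ l : Fin k, p l x ≤ w l} := by
    intro i x hx l
    obtain ⟨⟨hV, hXix⟩, hX0x⟩ := hx
    have h := hKnonneg _ (hloc i l) x
    have h1 : (0:ℝ) ≤ ∑ j : Fin k, lam i l j x * (w j - p j x) :=
      Finset.sum_nonneg fun j _ => mul_nonneg (hKnonneg _ (hlam i l j) x)
        (by linarith [hV j])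
    have h2 : (∑ j : Fin (ni i), mu i l j x * ri i j x) ≤ 0 :=
      Finset.sum_nonpos fun j _ => mul_nonpos_of_nonneg_of_nonpos
        (hKnonneg _ (hmu i l j) x) (hXi i hXix j)
    have h3 : (∑ j : Fin n0, gam i l j x * r0 j x) ≤ 0 :=
      Finset.sum_nonpos fun j _ => mul_nonpos_of_nonneg_of_nonpos
        (hKnonneg _ (hgam i l j) x) (hX0 hX0x j)
    show p l (T i x) ≤ w l
    linarith
  refine ⟨fun y hy l => hinit l y hy, hind, ?_, ?_⟩
  · exact Set.sInter_subset_of_mem ⟨fun y hy l => hinit l y hy,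
      fun i y ⟨x, hx, hxy⟩ => hxy ▸ hind i x hx⟩
  · intro x hx
    have h := hKnonneg _ hprop x
    have h1 : (0:ℝ) ≤ ∑ t : Fin k, ν t x * (w t - p t x) :=
      Finset.sum_nonneg fun t _ => mul_nonneg (hKnonneg _ (hν t) x)
        (by linarith [hx t])
    linarith


end
end

section
/- Let S = (Xin, X0, {Xi}_{i∈I}, {Ti}_{i∈I}) be a CPDS over ℝ^d with tests r0_j, ri_j as in the definition of K well-representativeness, κ : ℝ^d → ℝ, and K a convex cone of nonnegative functions containing the scalars. Suppose the singleton basis {p} is K well-representative with respect to S and κ, and let Q be a finite set of functions ℝ^d → ℝ such that for every q ∈ Q, p − q ∈ K and, for every i ∈ I, (p − q) ∘ Ti ∈ K. Then the finite basis {p} ∪ Q is K well-representative with respect to S and κ. -/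
section

variable {d : ℕ} {ι : Type*}

/-- The finite template basis `p = (p₁, …, p_k)` is `K` well-representative w.r.t. the
CPDS with initial set `Xin`, updates `T i`, loop tests `r0` and branch tests `ri`, and
the property function `κ`: there exist `w ∈ ℝ^k`, `α ∈ ℝ` and multipliers
`ν, λ, μ, γ` in the cone `K` satisfying the initial-condition, local-branch and
property satisfiability conditions. -/
def KWellRep (Xin : Set (Fin d → ℝ)) (T : ι → (Fin d → ℝ) → (Fin d → ℝ))
    (κ : (Fin d → ℝ) → ℝ)
    (n0 : ℕ) (r0 : Fin n0 → (Fin d → ℝ) → ℝ)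
    (ni : ι → ℕ) (ri : (i : ι) → Fin (ni i) → (Fin d → ℝ) → ℝ)
    (K : Set ((Fin d → ℝ) → ℝ))
    {k : ℕ} (p : Fin k → (Fin d → ℝ) → ℝ) : Prop :=
  ∃ (w : Fin k → ℝ) (α : ℝ)
    (ν : Fin k → (Fin d → ℝ) → ℝ)
    (lam : ι → Fin k → Fin k → (Fin d → ℝ) → ℝ)
    (mu : (i : ι) → Fin k → Fin (ni i) → (Fin d → ℝ) → ℝ)
    (gam : ι → Fin k → Fin n0 → (Fin d → ℝ) → ℝ),
    (∀ t, ν t ∈ K) ∧ (∀ i l j, lam i l j ∈ K) ∧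
    (∀ i l j, mu i l j ∈ K) ∧ (∀ i l j, gam i l j ∈ K) ∧
    (∀ l : Fin k, ∀ y ∈ Xin, p l y ≤ w l) ∧
    (∀ (i : ι) (l : Fin k),
      (fun x => w l - (∑ j : Fin k, lam i l j x * (w j - p j x)) - p l (T i x)
        + (∑ j : Fin (ni i), mu i l j x * ri i j x)
        + (∑ j : Fin n0, gam i l j x * r0 j x)) ∈ K) ∧
    (fun x => α - κ x - ∑ t : Fin k, ν t x * (w t - p t x)) ∈ K

/-- If the singleton basis `{p}` is `K` well-representative w.r.t. the CPDS and `κ`,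
and `Q = {q₁, …, q_m}` is a finite set of functions such that `p − q ∈ K` and
`(p − q) ∘ Ti ∈ K` for all `q ∈ Q` and `i`, then `{p} ∪ Q` is `K` well-representative
w.r.t. the CPDS and `κ`. -/
theorem kWellRep_union_of_single (d : ℕ) (ι : Type*) [Fintype ι]
    (Xin X0 : Set (Fin d → ℝ)) (X : ι → Set (Fin d → ℝ))
    (T : ι → (Fin d → ℝ) → (Fin d → ℝ))
    (κ : (Fin d → ℝ) → ℝ)
    (n0 : ℕ) (r0 : Fin n0 → (Fin d → ℝ) → ℝ)
    (ni : ι → ℕ) (ri : (i : ι) → Fin (ni i) → (Fin d → ℝ) → ℝ)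
    (hX0 : X0 ⊆ {x | ∀ j : Fin n0, r0 j x ≤ 0})
    (hXi : ∀ i : ι, X i ⊆ {x | ∀ j : Fin (ni i), ri i j x ≤ 0})
    (K : Set ((Fin d → ℝ) → ℝ))
    (hKnonneg : ∀ f ∈ K, ∀ x : Fin d → ℝ, 0 ≤ f x)
    (hKadd : ∀ f ∈ K, ∀ g ∈ K, (fun x => f x + g x) ∈ K)
    (hKsmul : ∀ f ∈ K, ∀ t : ℝ, 0 ≤ t → (fun x => t * f x) ∈ K)
    (hKconst : ∀ c : ℝ, 0 ≤ c → (fun _ : Fin d → ℝ => c) ∈ K)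
    (p : (Fin d → ℝ) → ℝ) (m : ℕ) (q : Fin m → (Fin d → ℝ) → ℝ)
    (hp : KWellRep Xin T κ n0 r0 ni ri K (fun _ : Fin 1 => p))
    (hq : ∀ j : Fin m, (fun x => p x - q j x) ∈ K ∧
      ∀ i : ι, (fun x => p (T i x) - q j (T i x)) ∈ K) :
    KWellRep Xin T κ n0 r0 ni ri K (Fin.cons p q : Fin (m + 1) → (Fin d → ℝ) → ℝ) := by
  obtain ⟨w0, α, ν0, lam0, mu0, gam0, hν0, hlam0, hmu0, hgam0, hinit0, hloc0, hprop0⟩ := hp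
  refine ⟨fun _ => w0 0, α, Fin.cons (ν0 0) (fun _ _ => 0),
    fun i l j => if j = 0 then lam0 i 0 0 else fun _ => 0,
    fun i l => mu0 i 0, fun i l => gam0 i 0, ?_, ?_, ?_, ?_, ?_, ?_, ?_⟩
  · intro t
    refine Fin.cases ?_ ?_ t
    · exact hν0 0
    · intro t'
      simpa using hKconst 0 le_rfl
  · intro i l j
    by_cases h : j = 0
    · simp [h, hlam0]
    · simpa [h] using hKconst 0 le_rfl
  · intro i l j; exact hmu0 i 0 j
  · intro i l j; exact hgam0 i 0 j
  · intro l y hy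
    refine Fin.cases ?_ ?_ l
    · simpa using hinit0 0 y hy
    · intro t
      have h1 := hKnonneg _ (hq t).1 y
      have h2 := hinit0 0 y hy
      simp only [Fin.cons_succ]
      simp only [Fin.sum_univ_one] at h2
      linarith
  · intro i l
    have hS := hloc0 i 0
    simp only [Fin.sum_univ_one] at hS
    refine Fin.cases ?_ ?_ l
    · convert hS using 1
      funext x
      rw [Fin.sum_univ_succ]
      simp [Fin.succ_ne_zero]
    · intro t
      have := hKadd _ hS _ ((hq t).2 i)
      convert this using 1
      funext x
      rw [Fin.sum_univ_succ]
      simp [Fin.succ_ne_zero]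
      ring
  · convert hprop0 using 1
    funext x
    rw [Fin.sum_univ_succ]
    simp


end
end

section
/- Let S = (Xin, X0, {Xi}_{i∈I}, {Ti}_{i∈I}) be a CPDS over ℝ^d with tests r0_j, ri_j as in the definition of K well-representativeness, κ : ℝ^d → ℝ, and K a convex cone of nonnegative functions containing the scalars. If the singleton basis {p} and the finite basis Q = {q_1, …, q_m} are each K well-representative with respect to S and κ, then the finite basis {p, q_1, …, q_m} is K well-representative with respect to S and κ. -/
section

variable {d : ℕ} {ι : Type*}

/-- If the singleton basis `{p}` and the finite basis `Q = {q₁, …, q_m}` are each `K`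
well-representative w.r.t. the CPDS and `κ`, then so is `{p, q₁, …, q_m}`. -/
theorem kWellRep_union_of_two (d : ℕ) (ι : Type*) [Fintype ι]
    (Xin X0 : Set (Fin d → ℝ)) (X : ι → Set (Fin d → ℝ))
    (T : ι → (Fin d → ℝ) → (Fin d → ℝ))
    (κ : (Fin d → ℝ) → ℝ)
    (n0 : ℕ) (r0 : Fin n0 → (Fin d → ℝ) → ℝ)
    (ni : ι → ℕ) (ri : (i : ι) → Fin (ni i) → (Fin d → ℝ) → ℝ)
    (hX0 : X0 ⊆ {x | ∀ j : Fin n0, r0 j x ≤ 0})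
    (hXi : ∀ i : ι, X i ⊆ {x | ∀ j : Fin (ni i), ri i j x ≤ 0})
    (K : Set ((Fin d → ℝ) → ℝ))
    (hKnonneg : ∀ f ∈ K, ∀ x : Fin d → ℝ, 0 ≤ f x)
    (hKadd : ∀ f ∈ K, ∀ g ∈ K, (fun x => f x + g x) ∈ K)
    (hKsmul : ∀ f ∈ K, ∀ t : ℝ, 0 ≤ t → (fun x => t * f x) ∈ K)
    (hKconst : ∀ c : ℝ, 0 ≤ c → (fun _ : Fin d → ℝ => c) ∈ K)
    (p : (Fin d → ℝ) → ℝ) (m : ℕ) (q : Fin m → (Fin d → ℝ) → ℝ)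
    (hp : KWellRep Xin T κ n0 r0 ni ri K (fun _ : Fin 1 => p))
    (hq : KWellRep Xin T κ n0 r0 ni ri K q) :
    KWellRep Xin T κ n0 r0 ni ri K (Fin.cons p q : Fin (m + 1) → (Fin d → ℝ) → ℝ) := by

  obtain ⟨wp, αp, νp, lamp, mup, gamp, hνp, hlamp, hmup, hgamp, h1p, h2p, h3p⟩ := hp
  obtain ⟨wq, αq, νq, lamq, muq, gamq, hνq, hlamq, hmuq, hgamq, h1q, h2q, h3q⟩ := hq
  refine ⟨Fin.cons (wp 0) wq, αq,
    Fin.cons (fun _ => 0) νq,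
    fun i => Fin.cons (Fin.cons (lamp i 0 0) (fun _ _ => 0))
      (fun l => Fin.cons (fun _ => 0) (lamq i l)),
    fun i => Fin.cons (mup i 0) (muq i),
    fun i => Fin.cons (gamp i 0) (gamq i),
    ?_, ?_, ?_, ?_, ?_, ?_, ?_⟩
  · intro t
    refine Fin.cases ?_ ?_ t
    · simpa using hKconst 0 le_rfl
    · intro t; simpa using hνq t
  · intro i l j
    refine Fin.cases ?_ ?_ l
    · refine Fin.cases ?_ ?_ j
      · simpa using hlamp i 0 0
      · intro j; simpa using hKconst 0 le_rfl
    · intro l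
      refine Fin.cases ?_ ?_ j
      · simpa using hKconst 0 le_rfl
      · intro j; simpa using hlamq i l j
  · intro i l j
    refine Fin.cases ?_ ?_ l
    · simpa using hmup i 0 j
    · intro l; simpa using hmuq i l j
  · intro i l j
    refine Fin.cases ?_ ?_ l
    · simpa using hgamp i 0 j
    · intro l; simpa using hgamq i l j
  · intro l y hy
    refine Fin.cases ?_ ?_ l
    · simpa using h1p 0 y hy
    · intro l; simpa using h1q l y hy
  · intro i l
    refine Fin.cases ?_ ?_ l
    · refine Set.mem_of_eq_of_mem ?_ (h2p i 0)
      funext x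
      simp [Fin.sum_univ_succ]
    · intro l
      refine Set.mem_of_eq_of_mem ?_ (h2q i l)
      funext x
      simp [Fin.sum_univ_succ]
  · refine Set.mem_of_eq_of_mem ?_ h3q
    funext x
    simp [Fin.sum_univ_succ]


end
end

section
/- Let S = (Xin, X0, {Xi}_{i∈I}, {Ti}_{i∈I}) be a polynomial CPDS over ℝ^d, κ ∈ ℝ[x_1,…,x_d], p ∈ ℝ[x_1,…,x_d], and w ∈ ℝ. Suppose there exist sums of squares of polynomials σ_0, σ_1, …, σ_{n_in}, ψ and, for each i ∈ I, sums of squares σ^i, μ^i_1, …, μ^i_{n_i}, γ^i_1, …, γ^i_{n0}, such that the following polynomial identities hold: (1) C(w) − p + ∑_{j=1}^{n_in} σ_j · rin_j = σ_0, where C(w) denotes the constant polynomial w; (2) for every i ∈ I, −(p ∘ Ti) + p + ∑_{j=1}^{n_i} μ^i_j · ri_j + ∑_{j=1}^{n0} γ^i_j · r0_j = σ^i, where p ∘ Ti denotes the polynomial obtained by substituting the components of Ti into p; (3) −κ + p = ψ. Then the reachable set R(S) is contained in V := {x ∈ ℝ^d | p(x) ≤ w}, and every x ∈ V satisfies κ(x)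 ≤ w. -/
open MvPolynomial

section

variable {d : ℕ} {ι : Type*}

/-
Each identity is evaluated pointwise: sums of squares are nonnegative and every multiplier
`σⱼ, μⁱⱼ, γⁱⱼ` meets a constraint that is nonpositive on the relevant set. Identity (1) then
gives `p ≤ w` on `Xin`, identity (2) shows `V` is preserved by every transition taken from
`V ∩ Xi ∩ X0`, so `V` is one of the sets whose intersection is `R(S)`, and identity (3)
gives `κ ≤ p` everywhere.
-/

lemma IsSumSq.map {R S F : Type*} [Semiring R] [Semiring S] [FunLike F R S]
    [RingHomClass F R S] (f : F) {s : R} (hs : IsSumSq s) : IsSumSq (f s) := by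
  induction hs with
  | zero => simp
  | sq_add a _ ih => simpa using ih.sq_add (f a)

lemma reach_subset {Xin X0 C : Set (Fin d → ℝ)} {X : ι → Set (Fin d → ℝ)}
    {T : ι → (Fin d → ℝ) → (Fin d → ℝ)} (hin : Xin ⊆ C)
    (hstep : ∀ i, T i '' (C ∩ X i ∩ X0) ⊆ C) : Reach Xin X0 X T ⊆ C :=
  Set.sInter_subset_of_mem ⟨hin, hstep⟩

namespace MvPolynomial

lemma eval_bind₁_eq {σ τ R : Type*} [CommSemiring R] (x : τ → R) (g : σ → MvPolynomial τ R)
    (p : MvPolynomial σ R) : eval x (bind₁ g p) = eval (fun i ↦ eval x (g i)) p :=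
  eval₂Hom_bind₁ _ _ _ _

variable {σ R J : Type*} [CommRing R] [LinearOrder R] [IsStrictOrderedRing R] (x : σ → R)

lemma eval_nonneg_of_isSumSq {s : MvPolynomial σ R} (hs : IsSumSq s) : 0 ≤ eval x s :=
  (hs.map (eval x)).nonneg

lemma eval_sum_mul_nonpos [Fintype J] {s r : J → MvPolynomial σ R}
    (hs : ∀ j, IsSumSq (s j)) (hr : ∀ j, eval x (r j) ≤ 0) : eval x (∑ j, s j * r j) ≤ 0 := by
  rw [map_sum]
  exact Finset.sum_nonpos fun j _ ↦ by
    rw [map_mul]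
    exact mul_nonpos_of_nonneg_of_nonpos (eval_nonneg_of_isSumSq x (hs j)) (hr j)

lemma eval_nonneg_of_add_eq_isSumSq {q t s : MvPolynomial σ R} (h : q + t = s)
    (hs : IsSumSq s) (ht : eval x t ≤ 0) : 0 ≤ eval x q := by
  have hsum : eval x q + eval x t = eval x s := by rw [← map_add, h]
  linarith [eval_nonneg_of_isSumSq x hs]

end MvPolynomial

theorem sos_certificate_invariant_general (d : ℕ) (ι : Type*)
    -- the polynomial CPDS:
    (nin n0 : ℕ) (ni : ι → ℕ)
    (rin : Fin nin → MvPolynomial (Fin d) ℝ)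
    (r0 : Fin n0 → MvPolynomial (Fin d) ℝ)
    (ri : (i : ι) → Fin (ni i) → MvPolynomial (Fin d) ℝ)
    (Tp : ι → Fin d → MvPolynomial (Fin d) ℝ)
    (Xin X0 : Set (Fin d → ℝ)) (X : ι → Set (Fin d → ℝ))
    (hXin : Xin ⊆ {x | ∀ j : Fin nin, eval x (rin j) ≤ 0})
    (hX0 : X0 ⊆ {x | ∀ j : Fin n0, eval x (r0 j) ≤ 0})
    (hXi : ∀ i : ι, X i ⊆ {x | ∀ j : Fin (ni i), eval x (ri i j) ≤ 0})
    -- the property polynomial, the template polynomial and its bound: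
    (κ p : MvPolynomial (Fin d) ℝ) (w : ℝ)
    -- the SOS certificates:
    (σ0 : MvPolynomial (Fin d) ℝ) (hσ0 : IsSumSq σ0)
    (σ : Fin nin → MvPolynomial (Fin d) ℝ) (hσ : ∀ j, IsSumSq (σ j))
    (ψ : MvPolynomial (Fin d) ℝ) (hψ : IsSumSq ψ)
    (σi : ι → MvPolynomial (Fin d) ℝ) (hσi : ∀ i, IsSumSq (σi i))
    (μ : (i : ι) → Fin (ni i) → MvPolynomial (Fin d) ℝ) (hμ : ∀ i j, IsSumSq (μ i j))
    (γ : ι → Fin n0 → MvPolynomial (Fin d) ℝ) (hγ : ∀ i j, IsSumSq (γ i j))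
    -- the three polynomial identities:
    (h1 : C w - p + ∑ j : Fin nin, σ j * rin j = σ0)
    (h2 : ∀ i : ι, -(bind₁ (Tp i) p) + p + (∑ j : Fin (ni i), μ i j * ri i j)
      + (∑ j : Fin n0, γ i j * r0 j) = σi i)
    (h3 : -κ + p = ψ) :
    Reach Xin X0 X (fun i x => fun l : Fin d => eval x (Tp i l)) ⊆
      {x : Fin d → ℝ | eval x p ≤ w} ∧
    ∀ x ∈ {x : Fin d → ℝ | eval x p ≤ w}, eval x κ ≤ w := by
  refine ⟨reach_subset (fun x hx ↦ ?_) fun i _ ⟨x, ⟨⟨hxV, hxXi⟩, hxX0⟩, hTx⟩ ↦ ?_,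
    fun x hxV ↦ ?_⟩
  · have hinit := eval_nonneg_of_add_eq_isSumSq x h1 hσ0 (eval_sum_mul_nonpos x hσ (hXin hx))
    rwa [map_sub, eval_C, sub_nonneg] at hinit
  · have hmult : eval x ((∑ j, μ i j * ri i j) + ∑ j, γ i j * r0 j) ≤ 0 := by
      rw [map_add]
      exact add_nonpos (eval_sum_mul_nonpos x (hμ i) (hXi i hxXi))
        (eval_sum_mul_nonpos x (hγ i) (hX0 hxX0))
    have hstep := eval_nonneg_of_add_eq_isSumSq x (q := p - bind₁ (Tp i) p)
      (by rw [← h2 i]; ring) (hσi i) hmult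
    rw [map_sub, sub_nonneg, eval_bind₁_eq] at hstep
    rw [← hTx]
    exact hstep.trans hxV
  · have hκ := eval_nonneg_of_isSumSq x hψ
    rw [← h3, neg_add_eq_sub, map_sub, sub_nonneg] at hκ
    exact hκ.trans hxV

/-- Single-template SOS certificates: if the three polynomial identities of the SOS
hierarchy hold with sums of squares `σ₀, σⱼ, σⁱ, μⁱⱼ, γⁱⱼ, ψ`, then the reachable set
of the polynomial CPDS is contained in `V = {x | p(x) ≤ w}` and `κ(x) ≤ w` on `V`. -/
theorem sos_certificate_invariant (d : ℕ) (ι : Type*) [Fintype ι]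
    -- the polynomial CPDS:
    (nin n0 : ℕ) (ni : ι → ℕ)
    (rin : Fin nin → MvPolynomial (Fin d) ℝ)
    (r0 : Fin n0 → MvPolynomial (Fin d) ℝ)
    (ri : (i : ι) → Fin (ni i) → MvPolynomial (Fin d) ℝ)
    (Tp : ι → Fin d → MvPolynomial (Fin d) ℝ)
    (Xin X0 : Set (Fin d → ℝ)) (X : ι → Set (Fin d → ℝ))
    (hXin : Xin ⊆ {x | ∀ j : Fin nin, eval x (rin j) ≤ 0})
    (hX0 : X0 ⊆ {x | ∀ j : Fin n0, eval x (r0 j) ≤ 0})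
    (hXi : ∀ i : ι, X i ⊆ {x | ∀ j : Fin (ni i), eval x (ri i j) ≤ 0})
    -- the property polynomial, the template polynomial and its bound:
    (κ p : MvPolynomial (Fin d) ℝ) (w : ℝ)
    -- the SOS certificates:
    (σ0 : MvPolynomial (Fin d) ℝ) (hσ0 : IsSumSq σ0)
    (σ : Fin nin → MvPolynomial (Fin d) ℝ) (hσ : ∀ j, IsSumSq (σ j))
    (ψ : MvPolynomial (Fin d) ℝ) (hψ : IsSumSq ψ)
    (σi : ι → MvPolynomial (Fin d) ℝ) (hσi : ∀ i, IsSumSq (σi i))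
    (μ : (i : ι) → Fin (ni i) → MvPolynomial (Fin d) ℝ) (hμ : ∀ i j, IsSumSq (μ i j))
    (γ : ι → Fin n0 → MvPolynomial (Fin d) ℝ) (hγ : ∀ i j, IsSumSq (γ i j))
    -- the three polynomial identities:
    (h1 : C w - p + ∑ j : Fin nin, σ j * rin j = σ0)
    (h2 : ∀ i : ι, -(bind₁ (Tp i) p) + p + (∑ j : Fin (ni i), μ i j * ri i j)
      + (∑ j : Fin n0, γ i j * r0 j) = σi i)
    (h3 : -κ + p = ψ) :
    Reach Xin X0 X (fun i x => fun l : Fin d => eval x (Tp i l)) ⊆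
      {x : Fin d → ℝ | eval x p ≤ w} ∧
    ∀ x ∈ {x : Fin d → ℝ | eval x p ≤ w}, eval x κ ≤ w :=
  sos_certificate_invariant_general d ι nin n0 ni rin r0 ri Tp Xin X0 X hXin hX0 hXi κ p w σ0 hσ0 σ
    hσ ψ hψ σi hσi μ hμ γ hγ h1 h2 h3

end
end
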